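/- For every u ∈ ℝⁿ there exists exactly one modified Newton direction d at u; that is, the generalized Newton equation G(u)d = −F(u) of the modified B-semismooth Newton method has a unique solution d ∈ ℝⁿ. -/

import Mathlib

/-!
The conditions on a modified Newton direction form a mixed complementarity problem: once one
checks that `Ā, Ī°, Ī⁺, Ī⁻` partition the coordinates, each coordinate asks that `x = d_k + u_k`
lie in one of the cones `ℝ, {0}, [0, ∞), (-∞, 0]`, that `q = γ(∇²g(u)d)_k + F_k(u)` lie in the
dual cone, and that `x q = 0`. For every `a > 0` this is the fixed-point equation
`d = P(d - a q(d))`, with `P` the coordinatewise projection onto the (shifted) cones. Since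
`γ∇²g(u)` is strongly monotone, `h ↦ h - a γ∇²g(u) h` is a contraction for small `a > 0`, and `P` is
nonexpansive, so the Banach fixed-point theorem gives exactly one solution.
-/

open scoped RealInnerProductSpace
open Filter Topology

noncomputable section

abbrev Euc (n : ℕ) := EuclideanSpace ℝ (Fin n)

variable {n : ℕ}

/-- Componentwise soft-thresholding operator `(S_{γw}(v))_k = sgn(v_k)·max(|v_k| − γw_k, 0)`. -/
def soft (γ : ℝ) (w : Fin n → ℝ) (v : Euc n) : Euc n :=
  WithLp.toLp 2 fun k => Real.sign (v k) * max (|v k| - γ * w k) 0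

/-- The map `F(u) = u − S_{γw}(u − γ∇g(u))`. -/
def Fm (g : Euc n → ℝ) (γ : ℝ) (w : Fin n → ℝ) (u : Euc n) : Euc n :=
  u - soft γ w (u - γ • gradient g u)

/-- The merit functional `Θ(u) = ‖F(u)‖₂²`. -/
def Th (g : Euc n → ℝ) (γ : ℝ) (w : Fin n → ℝ) (u : Euc n) : ℝ :=
  ‖Fm g γ w u‖ ^ 2

/-- The Hessian of `g` at `u`, applied to `d`: `∇²g(u)d`. -/
def hess (g : Euc n → ℝ) (u d : Euc n) : Euc n :=
  fderiv ℝ (gradient g) u d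

/-- Standing assumptions on `g`: twice continuously differentiable, Lipschitz continuous
second derivative, and uniform bounds `c₁‖h‖² ≤ ⟨∇²g(u)h, h⟩ ≤ c₂‖h‖²`. -/
structure Assump (n : ℕ) (g : Euc n → ℝ) (c₁ c₂ : ℝ) : Prop where
  contDiff : ContDiff ℝ 2 g
  lipHess : ∃ L : NNReal, LipschitzWith L fun u => fderiv ℝ (gradient g) u
  c1_pos : 0 < c₁
  c1_le_c2 : c₁ ≤ c₂
  lower : ∀ u h : Euc n, c₁ * ‖h‖ ^ 2 ≤ ⟪hess g u h, h⟫
  upper : ∀ u h : Euc n, ⟪hess g u h, h⟫ ≤ c₂ * ‖h‖ ^ 2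

/-- `A⁺(u)`. -/
def Ap (g : Euc n → ℝ) (γ : ℝ) (w : Fin n → ℝ) (u : Euc n) : Set (Fin n) :=
  {k | γ * gradient g u k + γ * w k < u k}

/-- `A⁻(u)`. -/
def Am (g : Euc n → ℝ) (γ : ℝ) (w : Fin n → ℝ) (u : Euc n) : Set (Fin n) :=
  {k | u k < γ * gradient g u k - γ * w k}

/-- `A(u) = A⁺(u) ∪ A⁻(u)`. -/
def Aset (g : Euc n → ℝ) (γ : ℝ) (w : Fin n → ℝ) (u : Euc n) : Set (Fin n) :=
  Ap g γ w u ∪ Am g γ w u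

/-- `I°(u)`. -/
def Iz (g : Euc n → ℝ) (γ : ℝ) (w : Fin n → ℝ) (u : Euc n) : Set (Fin n) :=
  {k | γ * gradient g u k - γ * w k < u k ∧ u k < γ * gradient g u k + γ * w k}

/-- `I⁺(u)`. -/
def Ipl (g : Euc n → ℝ) (γ : ℝ) (w : Fin n → ℝ) (u : Euc n) : Set (Fin n) :=
  {k | u k = γ * gradient g u k + γ * w k}

/-- `I⁻(u)`. -/
def Imi (g : Euc n → ℝ) (γ : ℝ) (w : Fin n → ℝ) (u : Euc n) : Set (Fin n) :=
  {k | u k = γ * gradient g u k - γ * w k}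

/-- `A⁺₊(u)`. -/
def App (g : Euc n → ℝ) (γ : ℝ) (w : Fin n → ℝ) (u : Euc n) : Set (Fin n) :=
  {k | γ * gradient g u k + γ * w k < u k ∧ u k < 0}

/-- `A⁻₋(u)`. -/
def Amm (g : Euc n → ℝ) (γ : ℝ) (w : Fin n → ℝ) (u : Euc n) : Set (Fin n) :=
  {k | 0 < u k ∧ u k < γ * gradient g u k - γ * w k}

/-- `I°₊(u)`. -/
def Izp (g : Euc n → ℝ) (γ : ℝ) (w : Fin n → ℝ) (u : Euc n) : Set (Fin n) :=
  {k | γ * gradient g u k - γ * w k < u k ∧ u k < γ * gradient g u k + γ * w k ∧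
    γ * gradient g u k + γ * w k < 0}

/-- `I°₋(u)`. -/
def Izm (g : Euc n → ℝ) (γ : ℝ) (w : Fin n → ℝ) (u : Euc n) : Set (Fin n) :=
  {k | 0 < γ * gradient g u k - γ * w k ∧ γ * gradient g u k - γ * w k < u k ∧
    u k < γ * gradient g u k + γ * w k}

/-- `Ā⁺(u) = A⁺(u) \ A⁺₊(u)`. -/
def ApBar (g : Euc n → ℝ) (γ : ℝ) (w : Fin n → ℝ) (u : Euc n) : Set (Fin n) :=
  Ap g γ w u \ App g γ w u

/-- `Ā⁻(u) = A⁻(u) \ A⁻₋(u)`. -/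
def AmBar (g : Euc n → ℝ) (γ : ℝ) (w : Fin n → ℝ) (u : Euc n) : Set (Fin n) :=
  Am g γ w u \ Amm g γ w u

/-- `Ā(u) = Ā⁺(u) ∪ Ā⁻(u)`. -/
def ABar (g : Euc n → ℝ) (γ : ℝ) (w : Fin n → ℝ) (u : Euc n) : Set (Fin n) :=
  ApBar g γ w u ∪ AmBar g γ w u

/-- `Ī°(u) = I°(u) \ (I°₊(u) ∪ I°₋(u))`. -/
def IzBar (g : Euc n → ℝ) (γ : ℝ) (w : Fin n → ℝ) (u : Euc n) : Set (Fin n) :=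
  Iz g γ w u \ (Izp g γ w u ∪ Izm g γ w u)

/-- `Ī⁺(u) = I⁺(u) ∪ A⁺₊(u) ∪ I°₊(u)`. -/
def IplBar (g : Euc n → ℝ) (γ : ℝ) (w : Fin n → ℝ) (u : Euc n) : Set (Fin n) :=
  Ipl g γ w u ∪ App g γ w u ∪ Izp g γ w u

/-- `Ī⁻(u) = I⁻(u) ∪ A⁻₋(u) ∪ I°₋(u)`. -/
def ImiBar (g : Euc n → ℝ) (γ : ℝ) (w : Fin n → ℝ) (u : Euc n) : Set (Fin n) :=
  Imi g γ w u ∪ Amm g γ w u ∪ Izm g γ w u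

/-- `d` is a modified Newton direction at `u`. -/
def IsModDir (g : Euc n → ℝ) (γ : ℝ) (w : Fin n → ℝ) (u d : Euc n) : Prop :=
  (∀ k ∈ ABar g γ w u, γ * hess g u d k = - Fm g γ w u k) ∧
  (∀ k ∈ IzBar g γ w u, d k = - u k) ∧
  (∀ k ∈ IplBar g γ w u, 0 ≤ d k + u k ∧ 0 ≤ γ * hess g u d k + Fm g γ w u k ∧
    (d k + u k) * (γ * hess g u d k + Fm g γ w u k) = 0) ∧
  (∀ k ∈ ImiBar g γ w u, d k + u k ≤ 0 ∧ γ * hess g u d k + Fm g γ w u k ≤ 0 ∧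
    (d k + u k) * (γ * hess g u d k + Fm g γ w u k) = 0)

/-- `d` is a B-Newton direction at `u` (unmodified index sets). -/
def IsBDir (g : Euc n → ℝ) (γ : ℝ) (w : Fin n → ℝ) (u d : Euc n) : Prop :=
  (∀ k ∈ Aset g γ w u, γ * hess g u d k = - Fm g γ w u k) ∧
  (∀ k ∈ Iz g γ w u, d k = - u k) ∧
  (∀ k ∈ Ipl g γ w u, 0 ≤ d k + u k ∧ 0 ≤ γ * hess g u d k + Fm g γ w u k ∧
    (d k + u k) * (γ * hess g u d k + Fm g γ w u k) = 0) ∧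
  (∀ k ∈ Imi g γ w u, d k + u k ≤ 0 ∧ γ * hess g u d k + Fm g γ w u k ≤ 0 ∧
    (d k + u k) * (γ * hess g u d k + Fm g γ w u k) = 0)

/-- `t = β^l` where `l` is the smallest nonnegative integer satisfying the Armijo inequality. -/
def ArmijoStepsize (g : Euc n → ℝ) (γ : ℝ) (w : Fin n → ℝ) (β σ : ℝ) (u d : Euc n)
    (t : ℝ) : Prop :=
  ∃ l : ℕ, t = β ^ l ∧
    Th g γ w (u + (β ^ l) • d) ≤ (1 - 2 * σ * β ^ l) * Th g γ w u ∧
    ∀ l' < l, ¬ (Th g γ w (u + (β ^ l') • d) ≤ (1 - 2 * σ * β ^ l') * Th g γ w u)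

/-- The modified B-semismooth Newton iteration with Armijo damping. -/
def ModIter (g : Euc n → ℝ) (γ : ℝ) (w : Fin n → ℝ) (β σ : ℝ)
    (useq dseq : ℕ → Euc n) (tseq : ℕ → ℝ) : Prop :=
  (∀ j, IsModDir g γ w (useq j) (dseq j)) ∧
  (∀ j, ArmijoStepsize g γ w β σ (useq j) (dseq j) (tseq j)) ∧
  (∀ j, useq (j + 1) = useq j + tseq j • dseq j)

/-- The B-semismooth Newton iteration (unmodified index sets) with Armijo damping. -/
def BIter (g : Euc n → ℝ) (γ : ℝ) (w : Fin n → ℝ) (β σ : ℝ)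
    (useq dseq : ℕ → Euc n) (tseq : ℕ → ℝ) : Prop :=
  (∀ j, IsBDir g γ w (useq j) (dseq j)) ∧
  (∀ j, ArmijoStepsize g γ w β σ (useq j) (dseq j) (tseq j)) ∧
  (∀ j, useq (j + 1) = useq j + tseq j • dseq j)

section StronglyMonotone

variable {E : Type*} [NormedAddCommGroup E] [InnerProductSpace ℝ E] {c : ℝ} {M : E →L[ℝ] E}

theorem exists_contractingWith_sub_smul (hc : 0 < c) (hM : ∀ h, c * ‖h‖ ^ 2 ≤ ⟪M h, h⟫) :
    ∃ a : ℝ, 0 < a ∧ ∃ K, ContractingWith K fun h => h - a • M h := by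
  set C := max ‖M‖ c
  have hC : 0 < C := hc.trans_le (le_max_right _ _)
  set r := c / C
  have hr : 0 < r := div_pos hc hC
  have hr1 : r ≤ 1 := (div_le_one hC).2 (le_max_right _ _)
  have hK0 : 0 ≤ 1 - r ^ 2 / 2 := by nlinarith
  have hcontr : ∀ h, ‖h - (r / C) • M h‖ ≤ (1 - r ^ 2 / 2) * ‖h‖ := by
    intro h
    have hinner : r ^ 2 * ‖h‖ ^ 2 ≤ r / C * ⟪M h, h⟫ :=
      calc r ^ 2 * ‖h‖ ^ 2 = r / C * (c * ‖h‖ ^ 2) := by simp only [r]; field_simp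
        _ ≤ r / C * ⟪M h, h⟫ := by gcongr; exact hM h
    have hnorm : (r / C * ‖M h‖) ^ 2 ≤ r ^ 2 * ‖h‖ ^ 2 :=
      calc (r / C * ‖M h‖) ^ 2 ≤ (r / C * (C * ‖h‖)) ^ 2 := by
            gcongr; exact M.le_of_opNorm_le (le_max_left _ _) h
        _ = r ^ 2 * ‖h‖ ^ 2 := by field_simp
    have hsq : ‖h - (r / C) • M h‖ ^ 2 ≤ (1 - r ^ 2) * ‖h‖ ^ 2 := by
      rw [norm_sub_sq_real, real_inner_smul_right, real_inner_comm, norm_smul,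
        Real.norm_of_nonneg (div_pos hr hC).le]
      linarith
    refine le_of_sq_le_sq ?_ (by positivity)
    calc ‖h - (r / C) • M h‖ ^ 2 ≤ (1 - r ^ 2) * ‖h‖ ^ 2 := hsq
      _ ≤ ((1 - r ^ 2 / 2) * ‖h‖) ^ 2 := by rw [mul_pow]; gcongr; nlinarith
  refine ⟨r / C, div_pos hr hC, (1 - r ^ 2 / 2).toNNReal,
    Real.toNNReal_lt_one.2 (by nlinarith), LipschitzWith.of_dist_le_mul fun x y => ?_⟩
  rw [Real.coe_toNNReal _ hK0, dist_eq_norm, dist_eq_norm]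
  have := hcontr (x - y)
  rwa [map_sub, smul_sub, sub_sub_sub_comm] at this

theorem exists_pos_existsUnique_fixedPoint [CompleteSpace E] (hc : 0 < c)
    (hM : ∀ h, c * ‖h‖ ^ 2 ≤ ⟪M h, h⟫) {P : E → E} (hP : LipschitzWith 1 P) (F : E) :
    ∃ a : ℝ, 0 < a ∧ ∃! d, P (d - a • (M d + F)) = d := by
  obtain ⟨a, ha, K, hK⟩ := exists_contractingWith_sub_smul hc hM
  have hT : ContractingWith K fun d => P (d - a • (M d + F)) := by
    refine ⟨hK.1, LipschitzWith.of_dist_le_mul fun x y => ?_⟩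
    calc dist (P _) (P _) ≤ dist (x - a • (M x + F)) (y - a • (M y + F)) := by
          simpa only [NNReal.coe_one, one_mul] using hP.dist_le_mul _ _
      _ = dist (x - a • M x) (y - a • M y) := by
          rw [smul_add, smul_add, ← sub_sub, ← sub_sub, dist_sub_right]
      _ ≤ K * dist x y := hK.2.dist_le_mul x y
  exact ⟨a, ha, hT.fixedPoint, hT.fixedPoint_isFixedPt,
    fun y hy => hT.fixedPoint_unique' hy hT.fixedPoint_isFixedPt⟩

end StronglyMonotone

/-- The closed convex cones of `ℝ`. `IsComplementary c x q` says `x ∈ K`, `q ∈ K*` and `x * q = 0`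
for the cone `K` named by `c`, and `proj c` is the projection onto `K`. -/
inductive CoordCone
  | free
  | zero
  | nonneg
  | nonpos

namespace CoordCone

def IsComplementary : CoordCone → ℝ → ℝ → Prop
  | free, _, q => q = 0
  | zero, x, _ => x = 0
  | nonneg, x, q => 0 ≤ x ∧ 0 ≤ q ∧ x * q = 0
  | nonpos, x, q => x ≤ 0 ∧ q ≤ 0 ∧ x * q = 0

def proj : CoordCone → ℝ → ℝ
  | free, y => y
  | zero, _ => 0
  | nonneg, y => max y 0
  | nonpos, y => min y 0

theorem lipschitzWith_proj : ∀ c : CoordCone, LipschitzWith 1 c.proj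
  | free => LipschitzWith.id
  | zero => (LipschitzWith.const 0).weaken zero_le_one
  | nonneg => LipschitzWith.id.max_const 0
  | nonpos => LipschitzWith.id.min_const 0

theorem proj_sub_eq_iff (x p : ℝ) : ∀ c : CoordCone, c.proj (x - p) = x ↔ c.IsComplementary x p
  | free => by simp [proj, IsComplementary]
  | zero => eq_comm
  | nonneg => by
      simp only [proj, IsComplementary, max_eq_iff, mul_eq_zero]
      grind
  | nonpos => by
      simp only [proj, IsComplementary, min_eq_iff, mul_eq_zero]
      grind

theorem isComplementary_mul_left_iff {a : ℝ} (ha : 0 < a) (x q : ℝ) :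
    ∀ c : CoordCone, c.IsComplementary x (a * q) ↔ c.IsComplementary x q
  | free => by simp [IsComplementary, ha.ne']
  | zero => Iff.rfl
  | nonneg => by simp [IsComplementary, mul_nonneg_iff_of_pos_left ha, ha.ne']
  | nonpos => by
      have : a * q ≤ 0 ↔ q ≤ 0 := by
        rw [← neg_nonneg, ← mul_neg, mul_nonneg_iff_of_pos_left ha, neg_nonneg]
      simp [IsComplementary, this, ha.ne']

end CoordCone

section Euclidean

variable {ι : Type*} [Fintype ι]

theorem EuclideanSpace.lipschitzWith_one_coordwise {φ : ι → ℝ → ℝ}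
    (hφ : ∀ i, LipschitzWith 1 (φ i)) :
    LipschitzWith 1 fun y : EuclideanSpace ℝ ι => WithLp.toLp 2 fun i => φ i (y i) := by
  refine LipschitzWith.of_dist_le_mul fun y z => ?_
  rw [NNReal.coe_one, one_mul, EuclideanSpace.dist_eq, EuclideanSpace.dist_eq]
  gcongr with i
  simpa only [NNReal.coe_one, one_mul] using (hφ i).dist_le_mul (y i) (z i)

theorem existsUnique_isComplementary {c : ℝ} (hc : 0 < c)
    {M : EuclideanSpace ℝ ι →L[ℝ] EuclideanSpace ℝ ι} (hM : ∀ h, c * ‖h‖ ^ 2 ≤ ⟪M h, h⟫)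
    (K : ι → CoordCone) (b F : EuclideanSpace ℝ ι) :
    ∃! d : EuclideanSpace ℝ ι, ∀ i, (K i).IsComplementary (d i - b i) (M d i + F i) := by
  set Q : EuclideanSpace ℝ ι → EuclideanSpace ℝ ι := fun y => WithLp.toLp 2 fun i => (K i).proj (y i)
  have hQ : LipschitzWith 1 Q :=
    EuclideanSpace.lipschitzWith_one_coordwise fun i => (K i).lipschitzWith_proj
  have hP : LipschitzWith 1 fun y => b + Q (y - b) := LipschitzWith.of_dist_le_mul fun y z => by
    simpa only [dist_add_left, dist_sub_right] using hQ.dist_le_mul (y - b) (z - b)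
  obtain ⟨a, ha, h⟩ := exists_pos_existsUnique_fixedPoint hc hM hP F
  refine (existsUnique_congr fun d => ?_).1 h
  rw [← eq_sub_iff_add_eq', WithLp.ext_iff, funext_iff]
  refine forall_congr' fun i => ?_
  rw [← (K i).isComplementary_mul_left_iff ha, ← CoordCone.proj_sub_eq_iff]
  simp only [Q, PiLp.sub_apply, PiLp.smul_apply, PiLp.add_apply, smul_eq_mul]
  rw [sub_right_comm]

end Euclidean

open Classical in
/-- For `γ w > 0` the index sets `Ī°, Ī⁺, Ī⁻, Ā` partition the coordinates, so the order of the
tests does not matter. -/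
def modCone (g : Euc n → ℝ) (γ : ℝ) (w : Fin n → ℝ) (u : Euc n) (k : Fin n) : CoordCone :=
  if k ∈ IzBar g γ w u then .zero
  else if k ∈ IplBar g γ w u then .nonneg
  else if k ∈ ImiBar g γ w u then .nonpos
  else .free

section ModifiedDirection

variable {g : Euc n → ℝ} {γ : ℝ} {w : Fin n → ℝ} {u : Euc n} {k : Fin n}

theorem modCone_eq_zero_iff : modCone g γ w u k = .zero ↔ k ∈ IzBar g γ w u := by
  unfold modCone
  split_ifs <;> simp_all

theorem modCone_eq_nonneg_iff :
    modCone g γ w u k = .nonneg ↔ k ∈ IplBar g γ w u := by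
  simp only [modCone, IzBar, IplBar, ImiBar, Iz, Ipl, Imi, App, Amm, Izp, Izm, Set.mem_union,
    Set.mem_sdiff, Set.mem_ofPred_eq]
  split_ifs <;> grind

theorem modCone_eq_nonpos_iff (hk : 0 < γ * w k) :
    modCone g γ w u k = .nonpos ↔ k ∈ ImiBar g γ w u := by
  simp only [modCone, IzBar, IplBar, ImiBar, Iz, Ipl, Imi, App, Amm, Izp, Izm, Set.mem_union,
    Set.mem_sdiff, Set.mem_ofPred_eq]
  split_ifs <;> grind

theorem modCone_eq_free_iff (hk : 0 < γ * w k) :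
    modCone g γ w u k = .free ↔ k ∈ ABar g γ w u := by
  simp only [modCone, ABar, ApBar, AmBar, IzBar, IplBar, ImiBar, Ap, Am, Iz, Ipl, Imi, App, Amm,
    Izp, Izm, Set.mem_union, Set.mem_sdiff, Set.mem_ofPred_eq]
  split_ifs <;> grind

theorem isModDir_iff (hγw : ∀ k, 0 < γ * w k) (d : Euc n) :
    IsModDir g γ w u d ↔ ∀ k, (modCone g γ w u k).IsComplementary (d k + u k)
      (γ * hess g u d k + Fm g γ w u k) := by
  constructor
  · rintro ⟨hA, hz, hp, hm⟩ k
    cases hk : modCone g γ w u k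
    · have := hA k ((modCone_eq_free_iff (hγw k)).1 hk)
      simp only [CoordCone.IsComplementary]
      linarith
    · have := hz k (modCone_eq_zero_iff.1 hk)
      simp only [CoordCone.IsComplementary]
      linarith
    · exact hp k (modCone_eq_nonneg_iff.1 hk)
    · exact hm k ((modCone_eq_nonpos_iff (hγw k)).1 hk)
  · intro h
    refine ⟨fun k hk => ?_, fun k hk => ?_, fun k hk => ?_, fun k hk => ?_⟩
    · have := h k
      rw [(modCone_eq_free_iff (hγw k)).2 hk] at this
      exact eq_neg_of_add_eq_zero_left this
    · have := h k
      rw [modCone_eq_zero_iff.2 hk] at this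
      exact eq_neg_of_add_eq_zero_left this
    · have := h k
      rwa [modCone_eq_nonneg_iff.2 hk] at this
    · have := h k
      rwa [(modCone_eq_nonpos_iff (hγw k)).2 hk] at this

end ModifiedDirection

theorem stmt4_general {n : ℕ} (c₁ c₂ : ℝ) (g : Euc n → ℝ) (hg : Assump n g c₁ c₂)
    (w : Fin n → ℝ) (hw : ∀ k, 0 < w k) (γ : ℝ) (hγ : 0 < γ)
    (u : Euc n) :
    ∃! d : Euc n, IsModDir g γ w u d := by
  have hM : ∀ h, γ * c₁ * ‖h‖ ^ 2 ≤ ⟪(γ • fderiv ℝ (gradient g) u) h, h⟫ := fun h => by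
    rw [smul_apply, real_inner_smul_left, mul_assoc]
    exact mul_le_mul_of_nonneg_left (hg.lower u h) hγ.le
  refine (existsUnique_congr fun d => ?_).1 (existsUnique_isComplementary (mul_pos hγ hg.c1_pos)
    hM (modCone g γ w u) (-u) (Fm g γ w u))
  rw [isModDir_iff fun k => mul_pos hγ (hw k)]
  simp only [PiLp.neg_apply, sub_neg_eq_add, smul_apply, PiLp.smul_apply,
    smul_eq_mul, hess]

/-- for every `u` there is exactly one modified Newton direction. -/
theorem stmt4 {n : ℕ} (hn : 1 ≤ n) (c₁ c₂ : ℝ) (g : Euc n → ℝ) (hg : Assump n g c₁ c₂)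
    (w : Fin n → ℝ) (hw : ∀ k, 0 < w k) (γ : ℝ) (hγ : 0 < γ)
    (u : Euc n) :
    ∃! d : Euc n, IsModDir g γ w u d :=
  stmt4_general c₁ c₂ g hg w hw γ hγ u
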